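/- Let I = {1,…,κ} with κ ≥ 2, and for each i ∈ I let A_i ∈ ℝ^{2×2} be invertible with ‖A_i‖ < 1. Suppose there exist θ ∈ S¹ and 0 < β < π/2 such that A_i(cl X(θ,β)) ⊂ X(θ,β) and A_iᵀ(cl X(θ,β)) ⊂ X(θ,β) for every i ∈ I, and moreover A_i(cl X(θ,β)) ∩ A_j(cl X(θ,β)) = {0} for i ≠ j. Then there exists a constant c > 0 such that for all incomparable finite words 𝚒, 𝚓 (neither is a prefix of the other) and all x, y ∈ X(θ,β), the unoriented angle between the line spanned by A_𝚒 x and the line spanned by A_𝚓 y is at least c·α₂(A_{𝚒∧𝚓})/α₁(A_{𝚒∧𝚓}), where 𝚒∧𝚓 denotes the longest common prefix of 𝚒 and 𝚓 (with A_∅ the identity matrix). -/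

import Mathlib

open MeasureTheory Filter Matrix Real Set

noncomputable section

abbrev E2 := EuclideanSpace ℝ (Fin 2)

noncomputable def mLin (A : Matrix (Fin 2) (Fin 2) ℝ) : E2 →L[ℝ] E2 :=
  LinearMap.toContinuousLinearMap (Matrix.toEuclideanLin A)

/-- largest singular value = operator norm -/
noncomputable def a1 (A : Matrix (Fin 2) (Fin 2) ℝ) : ℝ := ‖mLin A‖

/-- smallest singular value -/
noncomputable def a2 (A : Matrix (Fin 2) (Fin 2) ℝ) : ℝ := |A.det| / a1 A

/-- product of the matrices along a finite word -/
noncomputable def wprod {κ : ℕ} (A : Fin κ → Matrix (Fin 2) (Fin 2) ℝ) (l : List (Fin κ)) :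
    Matrix (Fin 2) (Fin 2) ℝ := (l.map A).prod

/-- the cone X(θ,β) -/
def cone (θ : E2) (β : ℝ) : Set E2 :=
  {x | x ≠ 0 ∧ Real.cos (β / 2) * ‖x‖ < |(inner ℝ θ x : ℝ)|}

/-- unoriented angle between the lines spanned by two vectors -/
noncomputable def uangle (u v : E2) : ℝ :=
  Real.arccos (|(inner ℝ u v : ℝ)| / (‖u‖ * ‖v‖))

/-- the longest common prefix of two words -/
def lcp {κ : ℕ} : List (Fin κ) → List (Fin κ) → List (Fin κ)
  | a :: as, b :: bs => if a = b then a :: lcp as bs else []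
  | _, _ => []

/-!
Write `A_li x = W u` and `A_lj y = W v`, where `W = A_{li∧lj}`, `u ∈ A_i(cl X)` and
`v ∈ A_j(cl X)` for the first letters `i ≠ j` after the common prefix. The sets `A_i(cl X)` are
closed double cones meeting only at `0`, so compactness of their unit vectors bounds the sine
`|u × v| / (‖u‖ ‖v‖)` of the angle between `u` and `v` below by some `c > 0`. The map `W`
multiplies cross products by `det W` and lengths by at most `‖W‖`, so it shrinks that sine by at
most the factor `|det W| / ‖W‖² = α₂(W) / α₁(W)`; finally an angle dominates its sine.
-/

def cross (u v : E2) : ℝ := u 0 * v 1 - u 1 * v 0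

lemma inner_sq_add_cross_sq (u v : E2) :
    inner ℝ u v ^ 2 + cross u v ^ 2 = ‖u‖ ^ 2 * ‖v‖ ^ 2 := by
  simp only [EuclideanSpace.real_norm_sq_eq, PiLp.inner_apply, Fin.sum_univ_two, cross,
    RCLike.inner_apply, conj_trivial]
  ring

lemma cross_smul_smul (a b : ℝ) (u v : E2) : cross (a • u) (b • v) = a * b * cross u v := by
  simp only [cross, PiLp.smul_apply, smul_eq_mul]
  ring

lemma cross_toEuclideanLin (M : Matrix (Fin 2) (Fin 2) ℝ) (u v : E2) :
    cross (toEuclideanLin M u) (toEuclideanLin M v) = M.det * cross u v := by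
  simp only [cross, toLpLin_apply, PiLp.toLp_apply, mulVec, dotProduct, Fin.sum_univ_two,
    det_fin_two]
  ring

lemma exists_smul_eq_of_cross_eq_zero {u v : E2} (hu : u ≠ 0) (h : cross u v = 0) :
    ∃ r : ℝ, v = r • u := by
  have hinner : |inner ℝ u v| = ‖u‖ * ‖v‖ := by
    rw [← sq_eq_sq₀ (abs_nonneg _) (by positivity), sq_abs, mul_pow, ← inner_sq_add_cross_sq, h]
    ring
  rw [← Real.norm_eq_abs] at hinner
  have htfae := (norm_inner_eq_norm_tfae ℝ u v).out 0 2
  exact (htfae.1 hinner).resolve_left hu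

lemma abs_cross_div_le_uangle (u v : E2) : |cross u v| / (‖u‖ * ‖v‖) ≤ uangle u v := by
  have hsq : (|cross u v| / (‖u‖ * ‖v‖)) ^ 2 + (|inner ℝ u v| / (‖u‖ * ‖v‖)) ^ 2 ≤ 1 := by
    rw [div_pow, div_pow, ← add_div, sq_abs, sq_abs, add_comm, inner_sq_add_cross_sq, ← mul_pow]
    exact div_self_le_one _
  calc |cross u v| / (‖u‖ * ‖v‖) ≤ Real.sin (uangle u v) := by
        rw [uangle, Real.sin_arccos]
        exact Real.le_sqrt_of_sq_le (by linarith)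
    _ ≤ uangle u v := Real.sin_le (Real.arccos_nonneg _)

lemma norm_toEuclideanLin_le (M : Matrix (Fin 2) (Fin 2) ℝ) (u : E2) :
    ‖toEuclideanLin M u‖ ≤ a1 M * ‖u‖ :=
  (mLin M).le_opNorm u

lemma a2_div_a1_nonneg (M : Matrix (Fin 2) (Fin 2) ℝ) : 0 ≤ a2 M / a1 M :=
  div_nonneg (div_nonneg (abs_nonneg _) (norm_nonneg _)) (norm_nonneg _)

lemma a2_div_a1_mul_le_uangle (M : Matrix (Fin 2) (Fin 2) ℝ) (u v : E2) :
    a2 M / a1 M * (|cross u v| / (‖u‖ * ‖v‖)) ≤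
      uangle (toEuclideanLin M u) (toEuclideanLin M v) := by
  set U := toEuclideanLin M u
  set V := toEuclideanLin M v
  have hUV : |cross U V| = |M.det| * |cross u v| := by rw [cross_toEuclideanLin, abs_mul]
  have hleft : a2 M / a1 M * (|cross u v| / (‖u‖ * ‖v‖)) =
      |cross U V| / (a1 M * ‖u‖ * (a1 M * ‖v‖)) := by
    rw [hUV, a2]
    ring
  refine hleft ▸ le_trans ?_ (abs_cross_div_le_uangle U V)
  rcases (mul_nonneg (norm_nonneg U) (norm_nonneg V)).eq_or_lt with h0 | hpos
  · have hcross : cross U V = 0 := by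
      rcases mul_eq_zero.1 h0.symm with h | h <;> simp [norm_eq_zero.1 h, cross]
    simp [hcross]
  · exact div_le_div_of_nonneg_left (abs_nonneg _) hpos <|
      mul_le_mul (norm_toEuclideanLin_le M u) (norm_toEuclideanLin_le M v) (norm_nonneg V)
        (mul_nonneg (norm_nonneg _) (norm_nonneg u))

lemma cross_ne_zero_of_inter_subset {S T : Set E2}
    (hS : ∀ c : ℝ, c ≠ 0 → ∀ u ∈ S, c • u ∈ S) (hST : S ∩ T ⊆ {0})
    {u v : E2} (hu : u ∈ S) (hv : v ∈ T) (hu0 : u ≠ 0) (hv0 : v ≠ 0) : cross u v ≠ 0 := by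
  intro h
  obtain ⟨r, rfl⟩ := exists_smul_eq_of_cross_eq_zero hu0 h
  have hr : r ≠ 0 := by rintro rfl; simp at hv0
  exact hv0 (hST ⟨hS r hr u hu, hv⟩)

lemma exists_pos_mul_le_abs_cross {ι : Type*} [Finite ι] (G : ι → Set E2)
    (hclosed : ∀ i, IsClosed (G i)) (hsmul : ∀ i, ∀ c : ℝ, c ≠ 0 → ∀ u ∈ G i, c • u ∈ G i)
    (hsep : ∀ i j, i ≠ j → G i ∩ G j ⊆ {0}) :
    ∃ s > 0, ∀ i j, i ≠ j → ∀ u ∈ G i, ∀ v ∈ G j, s * (‖u‖ * ‖v‖) ≤ |cross u v| := by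
  set T := ⋃ p : {p : ι × ι // p.1 ≠ p.2},
    (G p.1.1 ∩ Metric.sphere 0 1) ×ˢ (G p.1.2 ∩ Metric.sphere 0 1)
  have hT : IsCompact T := isCompact_iUnion fun p =>
    ((isCompact_sphere 0 1).inter_left (hclosed _)).prod
      ((isCompact_sphere 0 1).inter_left (hclosed _))
  have hpos : ∀ q ∈ T, 0 < |cross q.1 q.2| := by
    rintro ⟨u, v⟩ hq
    obtain ⟨⟨⟨i, j⟩, hij⟩, ⟨hu, hu1⟩, ⟨hv, hv1⟩⟩ := Set.mem_iUnion.1 hq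
    exact abs_pos.2 <| cross_ne_zero_of_inter_subset (hsmul i) (hsep i j hij) hu hv
      (ne_zero_of_mem_unit_sphere ⟨u, hu1⟩) (ne_zero_of_mem_unit_sphere ⟨v, hv1⟩)
  have hcont : Continuous fun q : E2 × E2 => |cross q.1 q.2| := by
    unfold cross
    fun_prop
  obtain ⟨s, hs, hsT⟩ := hT.exists_forall_le' hcont.continuousOn hpos
  refine ⟨s, hs, fun i j hij u hu v hv => ?_⟩
  rcases eq_or_ne u 0 with rfl | hu0
  · simp [cross]
  rcases eq_or_ne v 0 with rfl | hv0
  · simp [cross]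
  have hnu : 0 < ‖u‖ := norm_pos_iff.2 hu0
  have hnv : 0 < ‖v‖ := norm_pos_iff.2 hv0
  have hmem : (‖u‖⁻¹ • u, ‖v‖⁻¹ • v) ∈ T := Set.mem_iUnion.2 ⟨⟨(i, j), hij⟩,
    ⟨hsmul i _ (inv_ne_zero hnu.ne') u hu, by simp [norm_smul, hnu.ne']⟩,
    ⟨hsmul j _ (inv_ne_zero hnv.ne') v hv, by simp [norm_smul, hnv.ne']⟩⟩
  have hunit := hsT _ hmem
  rw [cross_smul_smul, abs_mul, abs_mul, abs_inv, abs_inv, abs_norm, abs_norm] at hunit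
  rw [← le_div_iff₀ (mul_pos hnu hnv)]
  calc s ≤ _ := hunit
    _ = |cross u v| / (‖u‖ * ‖v‖) := by field_simp

lemma smul_mem_cone {θ : E2} {β c : ℝ} (hc : c ≠ 0) {x : E2} (hx : x ∈ cone θ β) :
    c • x ∈ cone θ β := by
  refine ⟨smul_ne_zero hc hx.1, ?_⟩
  rw [real_inner_smul_right, norm_smul, Real.norm_eq_abs, abs_mul, mul_left_comm]
  exact mul_lt_mul_of_pos_left hx.2 (abs_pos.2 hc)

lemma smul_mem_closure_cone {θ : E2} {β c : ℝ} (hc : c ≠ 0) {x : E2}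
    (hx : x ∈ closure (cone θ β)) : c • x ∈ closure (cone θ β) :=
  Set.MapsTo.closure (fun _ hy => smul_mem_cone hc hy) (continuous_const_smul c) hx

lemma isClosed_image_toEuclideanLin {M : Matrix (Fin 2) (Fin 2) ℝ} (hM : IsUnit M.det)
    {s : Set E2} (hs : IsClosed s) : IsClosed (toEuclideanLin M '' s) := by
  have hinj : Function.Injective M.mulVec :=
    mulVec_injective_iff_isUnit.2 ((isUnit_iff_isUnit_det M).2 hM)
  have hker : LinearMap.ker (toEuclideanLin M) = ⊥ :=
    LinearMap.ker_eq_bot.2 fun x y h => WithLp.ofLp_injective 2 (hinj (congrArg WithLp.ofLp h))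
  exact (LinearMap.isClosedEmbedding_of_injective hker).isClosedMap s hs

section Words

variable {κ : ℕ} (A : Fin κ → Matrix (Fin 2) (Fin 2) ℝ)

lemma toEuclideanLin_wprod_cons (a : Fin κ) (l : List (Fin κ)) (x : E2) :
    toEuclideanLin (wprod A (a :: l)) x = toEuclideanLin (A a) (toEuclideanLin (wprod A l) x) := by
  simp [wprod]

lemma toEuclideanLin_wprod_append (l₁ l₂ : List (Fin κ)) (x : E2) :
    toEuclideanLin (wprod A (l₁ ++ l₂)) x =
      toEuclideanLin (wprod A l₁) (toEuclideanLin (wprod A l₂) x) := by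
  simp [wprod]

lemma mapsTo_toEuclideanLin_wprod {S : Set E2} (hS : ∀ i, MapsTo (toEuclideanLin (A i)) S S) :
    ∀ l, MapsTo (toEuclideanLin (wprod A l)) S S
  | [] => fun x hx => by simpa [wprod] using hx
  | a :: l => fun x hx => by
    rw [toEuclideanLin_wprod_cons]
    exact hS a (mapsTo_toEuclideanLin_wprod hS l hx)

end Words

lemma exists_eq_lcp_append_of_not_prefix {κ : ℕ} :
    ∀ {li lj : List (Fin κ)}, ¬ li <+: lj → ¬ lj <+: li →
      ∃ (i j : Fin κ) (ti tj : List (Fin κ)), i ≠ j ∧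
        li = lcp li lj ++ i :: ti ∧ lj = lcp li lj ++ j :: tj
  | [], _, h, _ => absurd List.nil_prefix h
  | _, [], _, h => absurd List.nil_prefix h
  | a :: as, b :: bs, h₁, h₂ => by
    by_cases hab : a = b
    · subst hab
      obtain ⟨i, j, ti, tj, hij, e₁, e₂⟩ := exists_eq_lcp_append_of_not_prefix
        (fun h => h₁ (List.cons_prefix_cons.2 ⟨rfl, h⟩))
        (fun h => h₂ (List.cons_prefix_cons.2 ⟨rfl, h⟩))
      exact ⟨i, j, ti, tj, hij, by rw [lcp, if_pos rfl, List.cons_append, ← e₁],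
        by rw [lcp, if_pos rfl, List.cons_append, ← e₂]⟩
    · exact ⟨a, b, as, bs, hab, by rw [lcp, if_neg hab, List.nil_append],
        by rw [lcp, if_neg hab, List.nil_append]⟩

theorem angle_between_cylinders_general (κ : ℕ)
    (A : Fin κ → Matrix (Fin 2) (Fin 2) ℝ)
    (hinv : ∀ i, IsUnit (A i).det)
    (θ : E2) (β : ℝ)
    (hK1a : ∀ i, ∀ x ∈ closure (cone θ β), x ≠ 0 → Matrix.toEuclideanLin (A i) x ∈ cone θ β)
    (hK1c : ∀ i j, i ≠ j →
      (Matrix.toEuclideanLin (A i) '' closure (cone θ β)) ∩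
        (Matrix.toEuclideanLin (A j) '' closure (cone θ β)) = {0}) :
    ∃ c : ℝ, 0 < c ∧
      ∀ li lj : List (Fin κ), ¬ li <+: lj → ¬ lj <+: li →
        ∀ x ∈ cone θ β, ∀ y ∈ cone θ β,
          c * (a2 (wprod A (lcp li lj)) / a1 (wprod A (lcp li lj))) ≤
            uangle (Matrix.toEuclideanLin (wprod A li) x)
              (Matrix.toEuclideanLin (wprod A lj) y) := by
  set G : Fin κ → Set E2 := fun i => toEuclideanLin (A i) '' closure (cone θ β)
  obtain ⟨c, hc, hcross⟩ := exists_pos_mul_le_abs_cross G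
    (fun i => isClosed_image_toEuclideanLin (hinv i) isClosed_closure)
    (fun i r hr _ ⟨x, hx, hxu⟩ => ⟨r • x, smul_mem_closure_cone hr hx, by rw [map_smul, hxu]⟩)
    (fun i j hij => (hK1c i j hij).subset)
  have hmaps : ∀ l, MapsTo (toEuclideanLin (wprod A l)) (cone θ β) (cone θ β) :=
    mapsTo_toEuclideanLin_wprod A fun i x hx => hK1a i x (subset_closure hx) hx.1
  have hmemG : ∀ i l, ∀ x ∈ cone θ β, toEuclideanLin (wprod A (i :: l)) x ∈ G i :=
    fun i l x hx => ⟨_, subset_closure (hmaps l hx), (toEuclideanLin_wprod_cons A i l x).symm⟩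
  refine ⟨c, hc, fun li lj hij hji x hx y hy => ?_⟩
  obtain ⟨i, j, ti, tj, hne, hli, hlj⟩ := exists_eq_lcp_append_of_not_prefix hij hji
  generalize lcp li lj = w at hli hlj ⊢
  subst hli hlj
  set u := toEuclideanLin (wprod A (i :: ti)) x
  set v := toEuclideanLin (wprod A (j :: tj)) y
  have huv : 0 < ‖u‖ * ‖v‖ :=
    mul_pos (norm_pos_iff.2 (hmaps _ hx).1) (norm_pos_iff.2 (hmaps _ hy).1)
  have hc_le : c ≤ |cross u v| / (‖u‖ * ‖v‖) :=
    (le_div_iff₀ huv).2 (hcross i j hne u (hmemG i ti x hx) v (hmemG j tj y hy))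
  rw [toEuclideanLin_wprod_append, toEuclideanLin_wprod_append, mul_comm]
  exact (mul_le_mul_of_nonneg_left hc_le (a2_div_a1_nonneg _)).trans
    (a2_div_a1_mul_le_uangle _ u v)

/-- Lemma 4.3(ii): under (K1a), (K1b) and the separation condition (K1c), there is `c > 0`
such that for all incomparable finite words `li, lj` and all `x, y ∈ X(θ,β)`, the unoriented
angle between `A_li x` and `A_lj y` is at least `c · α₂(A_{li∧lj})/α₁(A_{li∧lj})`. -/
theorem angle_between_cylinders (κ : ℕ) (hκ : 2 ≤ κ)
    (A : Fin κ → Matrix (Fin 2) (Fin 2) ℝ)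
    (hinv : ∀ i, IsUnit (A i).det) (hnorm : ∀ i, a1 (A i) < 1)
    (θ : E2) (hθ : ‖θ‖ = 1) (β : ℝ) (hβ : 0 < β) (hβ' : β < π / 2)
    (hK1a : ∀ i, ∀ x ∈ closure (cone θ β), x ≠ 0 → Matrix.toEuclideanLin (A i) x ∈ cone θ β)
    (hK1b : ∀ i, ∀ x ∈ closure (cone θ β), x ≠ 0 → Matrix.toEuclideanLin (A i)ᵀ x ∈ cone θ β)
    (hK1c : ∀ i j, i ≠ j →
      (Matrix.toEuclideanLin (A i) '' closure (cone θ β)) ∩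
        (Matrix.toEuclideanLin (A j) '' closure (cone θ β)) = {0}) :
    ∃ c : ℝ, 0 < c ∧
      ∀ li lj : List (Fin κ), ¬ li <+: lj → ¬ lj <+: li →
        ∀ x ∈ cone θ β, ∀ y ∈ cone θ β,
          c * (a2 (wprod A (lcp li lj)) / a1 (wprod A (lcp li lj))) ≤
            uangle (Matrix.toEuclideanLin (wprod A li) x)
              (Matrix.toEuclideanLin (wprod A lj) y) :=
  angle_between_cylinders_general κ A hinv θ β hK1a hK1c

end
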